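/- Let ξ ∼ N(0, Σ) with Σ positive definite, let P = {p : ω_i^⊤ p ≤ b_i, i = 1,…,J} with each ω_i ≠ 0, let 0 < η ≤ 1/2, and let Δ_i = ‖Σ^{1/2}ω_i‖₂ Φ^{-1}(1−η). If x ∉ P_m = {x : ω_i^⊤ x ≤ b_i − Δ_i for all i}, then P(x + ξ ∈ P) < 1 − η. -/

import Mathlib

open MeasureTheory ProbabilityTheory

/-- The standard normal CDF `Φ`. -/
noncomputable def stdNormalCDF : ℝ → ℝ := fun x => cdf (gaussianReal 0 1) x

/-- The standard normal quantile function `Φ⁻¹`. -/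
noncomputable def stdNormalQuantile : ℝ → ℝ := Function.invFun stdNormalCDF

/-- The square root of a positive semidefinite matrix (removed from Mathlib; old definition). -/
noncomputable def Matrix.PosSemidef.sqrt {n : Type*} [Fintype n] [DecidableEq n]
    {A : Matrix n n ℝ} (hA : A.PosSemidef) : Matrix n n ℝ :=
  (hA.1.eigenvectorUnitary : Matrix n n ℝ) * Matrix.diagonal ((↑) ∘ (√·) ∘ hA.1.eigenvalues)
    * (star hA.1.eigenvectorUnitary : Matrix n n ℝ)

open Set NNReal

/- A point `x` outside `P_m` violates some constraint `i` by more than its margin, and the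
polyhedron lies in the half-space of that constraint. Its slack `ω_iᵀξ` is a centred Gaussian
with standard deviation `σ = ‖Σ^{1/2}ω_i‖₂`, so the half-space has probability
`Φ((b_i - ω_iᵀx)/σ) < Φ(Φ⁻¹(1 - η)) = 1 - η`; when `σ = 0` the slack is the Dirac mass at `0`
and the half-space is null. -/

namespace ProbabilityTheory

lemma continuous_cdf (μ : Measure ℝ) [IsProbabilityMeasure μ] [NullSingletonClass μ] :
    Continuous (cdf μ) := by
  refine continuous_iff_continuousAt.2 fun a => ?_
  rw [(monotone_cdf μ).continuousAt_iff_leftLim_eq_rightLim, (cdf μ).rightLim_eq]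
  have h := (cdf μ).measure_singleton a
  rw [measure_cdf, measure_singleton, eq_comm, ENNReal.ofReal_eq_zero, sub_nonpos] at h
  exact le_antisymm ((monotone_cdf μ).leftLim_le le_rfl) h

lemma strictMono_cdf_gaussianReal (μ : ℝ) {v : ℝ≥0} (hv : v ≠ 0) :
    StrictMono (cdf (gaussianReal μ v)) := by
  intro a c hac
  have hpos : gaussianReal μ v (Ioc a c) ≠ 0 := fun h0 =>
    hac.not_ge (by simpa [Real.volume_Ioc] using gaussianReal_absolutelyContinuous' μ hv h0)
  rwa [← measure_cdf (gaussianReal μ v), StieltjesFunction.measure_Ioc, ne_eq,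
    ENNReal.ofReal_eq_zero, not_le, sub_pos] at hpos

end ProbabilityTheory

lemma stdNormalCDF_strictMono : StrictMono stdNormalCDF :=
  strictMono_cdf_gaussianReal 0 one_ne_zero

lemma stdNormalCDF_stdNormalQuantile {p : ℝ} (hp₀ : 0 < p) (hp₁ : p < 1) :
    stdNormalCDF (stdNormalQuantile p) = p := by
  have := nullSingletonClass_gaussianReal (μ := 0) one_ne_zero
  refine Function.invFun_eq (mem_range_of_exists_le_of_exists_ge (continuous_cdf _) ?_ ?_)
  · exact ((tendsto_cdf_atBot _).eventually (eventually_le_nhds hp₀)).exists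
  · exact ((tendsto_cdf_atTop _).eventually (eventually_ge_nhds hp₁)).exists

lemma gaussianReal_zero_Iic {v : ℝ≥0} (hv : v ≠ 0) (c : ℝ) :
    gaussianReal 0 v (Iic c) = ENNReal.ofReal (stdNormalCDF (c / √v)) := by
  have hσ : 0 < √(v : ℝ) := Real.sqrt_pos.2 (NNReal.coe_pos.2 hv.bot_lt)
  have hscale : gaussianReal 0 v = (gaussianReal 0 1).map (√(v : ℝ) * ·) := by
    rw [gaussianReal_map_const_mul, mul_zero, mul_one]
    congr
    ext
    exact (Real.sq_sqrt v.2).symm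
  have hpre : (√(v : ℝ) * ·) ⁻¹' Iic c = Iic (c / √v) := by
    ext t
    simp only [mem_preimage, mem_Iic, le_div_iff₀ hσ, mul_comm]
  rw [hscale, Measure.map_apply (measurable_const_mul _) measurableSet_Iic, hpre, stdNormalCDF,
    ofReal_cdf]

lemma gaussianReal_zero_Iic_lt {v : ℝ≥0} {η c : ℝ} (hη₀ : 0 < η) (hη₁ : η < 1)
    (hc : c < √v * stdNormalQuantile (1 - η)) :
    (gaussianReal 0 v (Iic c)).toReal < 1 - η := by
  rcases eq_or_ne v 0 with rfl | hv
  · have hc₀ : ¬ (0 : ℝ) ≤ c := by simpa using hc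
    simp [gaussianReal_zero_var, hc₀, hη₁]
  have hσ : 0 < √(v : ℝ) := Real.sqrt_pos.2 (NNReal.coe_pos.2 hv.bot_lt)
  rw [gaussianReal_zero_Iic hv,
    ENNReal.toReal_ofReal (show 0 ≤ stdNormalCDF (c / √v) from cdf_nonneg _ _),
    ← stdNormalCDF_stdNormalQuantile (by linarith : 0 < 1 - η) (by linarith : 1 - η < 1)]
  exact stdNormalCDF_strictMono ((div_lt_iff₀' hσ).2 hc)

theorem chance_violation_of_not_mem_Pm_general {n J : ℕ} {Ω : Type*} [MeasurableSpace Ω]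
    (P : Measure Ω) [IsProbabilityMeasure P]
    (S : Matrix (Fin n) (Fin n) ℝ) (hS : S.PosDef)
    (ξ : Ω → Fin n → ℝ)
    (hξ : ∀ v : Fin n → ℝ,
      Measure.map (fun a => ∑ i, v i * ξ a i) P
        = gaussianReal 0 (∑ i, (hS.posSemidef.sqrt.mulVec v i) ^ 2).toNNReal)
    (ω : Fin J → Fin n → ℝ) (b : Fin J → ℝ)
    (η : ℝ) (hη₀ : 0 < η) (hη₁ : η ≤ 1 / 2)
    (Δ : Fin J → ℝ)
    (hΔ : ∀ i, Δ i = Real.sqrt (∑ k, (hS.posSemidef.sqrt.mulVec (ω i) k) ^ 2)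
                      * stdNormalQuantile (1 - η))
    (x : Fin n → ℝ)
    (hx : ¬ ∀ i, ∑ k, ω i k * x k ≤ b i - Δ i) :
    (P {a | ∀ i, ∑ k, ω i k * (x k + ξ a k) ≤ b i}).toReal < 1 - η := by
  push Not at hx
  obtain ⟨i, hi⟩ := hx
  set slack := fun a => ∑ k, ω i k * ξ a k
  have hsub : {a | ∀ j, ∑ k, ω j k * (x k + ξ a k) ≤ b j}
      ⊆ slack ⁻¹' Iic (b i - ∑ k, ω i k * x k) := fun a ha => by
    have hai := ha i
    simp only [mul_add, Finset.sum_add_distrib] at hai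
    simp only [mem_preimage, mem_Iic, slack]
    linarith
  have hslack : AEMeasurable slack P := aemeasurable_of_map_neZero (by rw [hξ]; infer_instance)
  have hvar : 0 ≤ ∑ k, (hS.posSemidef.sqrt.mulVec (ω i) k) ^ 2 :=
    Finset.sum_nonneg fun k _ => sq_nonneg _
  calc (P {a | ∀ j, ∑ k, ω j k * (x k + ξ a k) ≤ b j}).toReal
      ≤ (P (slack ⁻¹' Iic (b i - ∑ k, ω i k * x k))).toReal := measureReal_mono hsub
    _ = (P.map slack (Iic (b i - ∑ k, ω i k * x k))).toReal := by
        rw [Measure.map_apply_of_aemeasurable hslack measurableSet_Iic]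
    _ < 1 - η := by
        refine hξ (ω i) ▸ gaussianReal_zero_Iic_lt hη₀ (by linarith) ?_
        rw [Real.coe_toNNReal _ hvar, ← hΔ i]
        linarith

/-- Let `ξ ∼ N(0,Σ)` with `Σ` positive definite, `P = {p : ωᵢᵀp ≤ bᵢ}` with `ωᵢ ≠ 0`,
`0 < η ≤ 1/2` and `Δᵢ = ‖Σ^{1/2}ωᵢ‖₂ Φ⁻¹(1-η)`.  If `x ∉ P_m = {x : ωᵢᵀx ≤ bᵢ - Δᵢ ∀i}`
then `P(x + ξ ∈ P) < 1 - η`. -/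
theorem chance_violation_of_not_mem_Pm {n J : ℕ} {Ω : Type*} [MeasurableSpace Ω]
    (P : Measure Ω) [IsProbabilityMeasure P]
    (S : Matrix (Fin n) (Fin n) ℝ) (hS : S.PosDef)
    (ξ : Ω → Fin n → ℝ)
    (hξ : ∀ v : Fin n → ℝ,
      Measure.map (fun a => ∑ i, v i * ξ a i) P
        = gaussianReal 0 (∑ i, (hS.posSemidef.sqrt.mulVec v i) ^ 2).toNNReal)
    (ω : Fin J → Fin n → ℝ) (hω : ∀ i, ω i ≠ 0) (b : Fin J → ℝ)
    (η : ℝ) (hη₀ : 0 < η) (hη₁ : η ≤ 1 / 2)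
    (Δ : Fin J → ℝ)
    (hΔ : ∀ i, Δ i = Real.sqrt (∑ k, (hS.posSemidef.sqrt.mulVec (ω i) k) ^ 2)
                      * stdNormalQuantile (1 - η))
    (x : Fin n → ℝ)
    (hx : ¬ ∀ i, ∑ k, ω i k * x k ≤ b i - Δ i) :
    (P {a | ∀ i, ∑ k, ω i k * (x k + ξ a k) ≤ b i}).toReal < 1 - η :=
  chance_violation_of_not_mem_Pm_general P S hS ξ hξ ω b η hη₀ hη₁ Δ hΔ x hx
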